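/- arXiv:2404.17102 — 3 statements merged into one kernel-verified Lean document; each statement's English description precedes it below -/
import Mathlib

section
/- For every natural number p, the map m(i,j,k) = 1 + ((3p²+12p+11)/6)·i + ((−p−2)/2)·i² + (1/6)·i³ + ((2p+3)/2)·j + (−1/2)·j² − i·j + k is a bijection from the set {(i,j,k) ∈ ℕ³ : i + j + k ≤ p} onto the set {1, 2, …, (p+1)(p+2)(p+3)/6} of natural numbers. -/
private def Bf (p i j : ℕ) : ℕ := ∑ b ∈ Finset.range j, (p + 1 - i - b)
private def Af (p i : ℕ) : ℕ := ∑ a ∈ Finset.range i, (Bf p a (p - a) + 1)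
private def rf (p : ℕ) (x : ℕ × ℕ × ℕ) : ℕ := 1 + Af p x.1 + Bf p x.1 x.2.1 + x.2.2

private lemma Bf_succ (p i j : ℕ) : Bf p i (j+1) = Bf p i j + (p + 1 - i - j) :=
  Finset.sum_range_succ _ _

private lemma Af_succ (p i : ℕ) : Af p (i+1) = Af p i + (Bf p i (p - i) + 1) :=
  Finset.sum_range_succ _ _

private lemma Bf_mono (p i : ℕ) {j j' : ℕ} (h : j ≤ j') : Bf p i j ≤ Bf p i j' :=
  Finset.sum_le_sum_of_subset (Finset.range_subset_range.2 h)

private lemma Af_mono (p : ℕ) {i i' : ℕ} (h : i ≤ i') : Af p i ≤ Af p i' :=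
  Finset.sum_le_sum_of_subset (Finset.range_subset_range.2 h)

private lemma Bf_add_le (p i j : ℕ) : ∀ d, i + j + d ≤ p → Bf p i j + d ≤ Bf p i (j + d) := by
  intro d
  induction d with
  | zero => intro _; simp
  | succ d ih =>
    intro h
    have h1 : i + j + d ≤ p := by omega
    have := ih h1
    have h2 : Bf p i (j + d + 1) = Bf p i (j + d) + (p + 1 - i - (j + d)) := Bf_succ p i (j + d)
    rw [show j + (d + 1) = j + d + 1 by omega]
    omega

private lemma castB (p i j : ℕ) (h : i + j ≤ p) :
    (Bf p i j : ℚ) = ((2*(p:ℚ)+3)/2) * j - (1/2) * (j:ℚ)^2 - (i:ℚ)*(j:ℚ) := by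
  induction j with
  | zero => simp [Bf]
  | succ j ih =>
    have h1 : i + j ≤ p := by omega
    have h2 : (p + 1 - i - j : ℕ) = p + 1 - (i + j) := by omega
    have h3 : ((p + 1 - i - j : ℕ) : ℚ) = (p:ℚ) + 1 - i - j := by
      rw [h2, Nat.cast_sub (by omega)]; push_cast; ring
    rw [Bf_succ, Nat.cast_add, ih h1, h3]
    push_cast
    ring

private lemma castA (p : ℕ) : ∀ i, i ≤ p →
    (Af p i : ℚ) = ((3*(p:ℚ)^2 + 12*(p:ℚ) + 11)/6) * i + ((-(p:ℚ)-2)/2) * (i:ℚ)^2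
      + (1/6) * (i:ℚ)^3 := by
  intro i
  induction i with
  | zero => simp [Af]
  | succ i ih =>
    intro h
    have h1 : i ≤ p := by omega
    have hB := castB p i (p - i) (by omega)
    have hc : ((p - i : ℕ) : ℚ) = (p:ℚ) - i := by rw [Nat.cast_sub h1]
    rw [hc] at hB
    rw [Af_succ, Nat.cast_add, ih h1, Nat.cast_add, hB]
    push_cast
    ring
private lemma key (p : ℕ) (x : ℕ × ℕ × ℕ) (h : x.1 + x.2.1 + x.2.2 ≤ p) :
    (1 : ℚ) + ((3 * (p : ℚ) ^ 2 + 12 * (p : ℚ) + 11) / 6) * (x.1 : ℚ)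
      + ((-(p : ℚ) - 2) / 2) * (x.1 : ℚ) ^ 2 + (1 / 6) * (x.1 : ℚ) ^ 3
      + ((2 * (p : ℚ) + 3) / 2) * (x.2.1 : ℚ) + (-(1 / 2)) * (x.2.1 : ℚ) ^ 2
      - (x.1 : ℚ) * (x.2.1 : ℚ) + (x.2.2 : ℚ) = (rf p x : ℚ) := by
  obtain ⟨i, j, k⟩ := x
  replace h : i + j + k ≤ p := h
  simp only [rf]
  push_cast
  rw [castA p i (by omega), castB p i j (by omega)]
  ring

private lemma rlt (p : ℕ) {x y : ℕ × ℕ × ℕ} (hx : x.1 + x.2.1 + x.2.2 ≤ p)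
    (hy : y.1 + y.2.1 + y.2.2 ≤ p)
    (h : x.1 < y.1 ∨ (x.1 = y.1 ∧ (x.2.1 < y.2.1 ∨ (x.2.1 = y.2.1 ∧ x.2.2 < y.2.2)))) :
    rf p x < rf p y := by
  obtain ⟨i, j, k⟩ := x; obtain ⟨i', j', k'⟩ := y
  (try dsimp only at hx hy h)
  rcases h with h | ⟨rfl, h | ⟨rfl, h⟩⟩
  · have h1 : Bf p i j + (p - i - j) ≤ Bf p i (j + (p - i - j)) :=
      Bf_add_le p i j (p - i - j) (by omega)
    rw [show j + (p - i - j) = p - i by omega] at h1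
    have h2 : Af p (i+1) = Af p i + (Bf p i (p - i) + 1) := Af_succ p i
    have h3 : Af p (i+1) ≤ Af p i' := Af_mono p h
    simp only [rf]; (try dsimp only)
    omega
  · have h1 : Bf p i (j+1) = Bf p i j + (p + 1 - i - j) := Bf_succ p i j
    have h2 : Bf p i (j+1) ≤ Bf p i j' := Bf_mono p i h
    simp only [rf]; (try dsimp only)
    omega
  · simp only [rf]; (try dsimp only)
    omega

private lemma Bf_zero (p i : ℕ) : Bf p i 0 = 0 := by simp [Bf]

private lemma rtop (p : ℕ) {x : ℕ × ℕ × ℕ} (hx : x.1 + x.2.1 + x.2.2 ≤ p) :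
    rf p x ≤ 1 + Af p p := by
  rcases Nat.lt_or_ge x.1 p with h | h
  · have hlt := rlt p hx (by simp : ((p, 0, 0) : ℕ × ℕ × ℕ).1 + (p,0,0).2.1 + (p,0,0).2.2 ≤ p)
      (Or.inl h)
    simp only [rf, Bf_zero] at hlt ⊢
    (try dsimp only at hlt)
    omega
  · obtain ⟨i, j, k⟩ := x
    simp only at hx h
    have hi : i = p := by omega
    have hj : j = 0 := by omega
    have hk : k = 0 := by omega
    subst hi; subst hj; subst hk
    simp [rf, Bf_zero]

private lemma Nval (p : ℕ) : (p + 1) * (p + 2) * (p + 3) / 6 = 1 + Af p p := by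
  have h6 : (p + 1) * (p + 2) * (p + 3) = (1 + Af p p) * 6 := by
    have hA := castA p p le_rfl
    have hq : (((p + 1) * (p + 2) * (p + 3) : ℕ) : ℚ) = (((1 + Af p p) * 6 : ℕ) : ℚ) := by
      push_cast
      rw [hA]
      ring
    exact_mod_cast hq
  omega

private lemma surj_aux (p : ℕ) : ∀ d, 1 + d ≤ 1 + Af p p →
    ∃ x : ℕ × ℕ × ℕ, x.1 + x.2.1 + x.2.2 ≤ p ∧ rf p x = 1 + d := by
  intro d
  induction d with
  | zero => exact fun _ => ⟨(0, 0, 0), by simp, by simp [rf, Af, Bf]⟩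
  | succ d ih =>
    intro h
    obtain ⟨⟨i, j, k⟩, hx, hr⟩ := ih (by omega)
    (try dsimp only at hx)
    simp only [rf] at hr
    (try dsimp only at hr)
    by_cases h1 : i + j + k < p
    · exact ⟨(i, j, k + 1), by (try dsimp only); omega, by simp only [rf]; (try dsimp only); omega⟩
    · have h1 : i + j + k = p := by omega
      by_cases h2 : 0 < k
      · refine ⟨(i, j + 1, 0), by (try dsimp only); omega, ?_⟩
        simp only [rf]; (try dsimp only)
        have hB := Bf_succ p i j
        omega
      · by_cases h3 : i < p
        · refine ⟨(i + 1, 0, 0), by (try dsimp only); omega, ?_⟩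
          simp only [rf, Bf_zero]; (try dsimp only)
          have hA := Af_succ p i
          have hj : j = p - i := by omega
          subst hj
          omega
        · exfalso
          have hi : i = p := by omega
          have hj : j = 0 := by omega
          have hk : k = 0 := by omega
          subst hi; subst hj; subst hk
          rw [Bf_zero] at hr
          omega

/-- For every natural number `p`, the map
`m(i,j,k) = 1 + ((3p²+12p+11)/6)·i + ((−p−2)/2)·i² + (1/6)·i³ + ((2p+3)/2)·j + (−1/2)·j² − i·j + k`
(computed in `ℚ`) is a bijection from `{(i,j,k) ∈ ℕ³ : i + j + k ≤ p}` onto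
`{1, 2, …, (p+1)(p+2)(p+3)/6} ⊆ ℕ`. -/
theorem three_dim_index_bijection (p : ℕ) :
    Set.BijOn
      (fun x : ℕ × ℕ × ℕ =>
        (1 : ℚ) + ((3 * (p : ℚ) ^ 2 + 12 * (p : ℚ) + 11) / 6) * (x.1 : ℚ)
          + ((-(p : ℚ) - 2) / 2) * (x.1 : ℚ) ^ 2 + (1 / 6) * (x.1 : ℚ) ^ 3
          + ((2 * (p : ℚ) + 3) / 2) * (x.2.1 : ℚ) + (-(1 / 2)) * (x.2.1 : ℚ) ^ 2
          - (x.1 : ℚ) * (x.2.1 : ℚ) + (x.2.2 : ℚ))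
      {x : ℕ × ℕ × ℕ | x.1 + x.2.1 + x.2.2 ≤ p}
      {q : ℚ | ∃ n : ℕ, 1 ≤ n ∧ n ≤ (p + 1) * (p + 2) * (p + 3) / 6 ∧ q = (n : ℚ)} := by
  refine ⟨?_, ?_, ?_⟩
  · -- MapsTo
    intro x hx
    refine ⟨rf p x, by simp only [rf]; omega, ?_, key p x hx⟩
    rw [Nval p]
    exact rtop p hx
  · -- InjOn
    intro x hx y hy hf
    simp only at hf
    rw [key p x hx, key p y hy] at hf
    have hr : rf p x = rf p y := by exact_mod_cast hf
    rcases lt_trichotomy x.1 y.1 with h | h | h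
    · exact absurd hr (Nat.ne_of_lt (rlt p hx hy (Or.inl h)))
    · rcases lt_trichotomy x.2.1 y.2.1 with h2 | h2 | h2
      · exact absurd hr (Nat.ne_of_lt (rlt p hx hy (Or.inr ⟨h, Or.inl h2⟩)))
      · rcases lt_trichotomy x.2.2 y.2.2 with h3 | h3 | h3
        · exact absurd hr (Nat.ne_of_lt (rlt p hx hy (Or.inr ⟨h, Or.inr ⟨h2, h3⟩⟩)))
        · exact Prod.ext h (Prod.ext h2 h3)
        · exact absurd hr.symm (Nat.ne_of_lt (rlt p hy hx (Or.inr ⟨h.symm, Or.inr ⟨h2.symm, h3⟩⟩)))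
      · exact absurd hr.symm (Nat.ne_of_lt (rlt p hy hx (Or.inr ⟨h.symm, Or.inl h2⟩)))
    · exact absurd hr.symm (Nat.ne_of_lt (rlt p hy hx (Or.inl h)))
  · -- SurjOn
    intro q hq
    obtain ⟨n, hn1, hn2, rfl⟩ := hq
    rw [Nval p] at hn2
    obtain ⟨x, hx, hr⟩ := surj_aux p (n - 1) (by omega)
    refine ⟨x, hx, ?_⟩
    simp only
    rw [key p x hx]
    norm_cast
    omega
end

section
/- For every natural number p and every triple (i,j,k) ∈ ℕ³ with i + j + k ≤ p, the value m(i,j,k) = 1 + ((3p²+12p+11)/6)·i + ((−p−2)/2)·i² + (1/6)·i³ + ((2p+3)/2)·j + (−1/2)·j² − i·j + k equals 1 plus the number of triples (i',j',k') ∈ ℕ³ with i' + j' + k' ≤ p that precede (i,j,k) in lexicographic order. -/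
private def S3 (p i j k : ℕ) : Finset (ℕ × ℕ × ℕ) :=
  (Finset.range (p + 1) ×ˢ (Finset.range (p + 1) ×ˢ Finset.range (p + 1))).filter
    (fun y : ℕ × ℕ × ℕ =>
      y.1 + y.2.1 + y.2.2 ≤ p ∧
        (y.1 < i ∨ (y.1 = i ∧ (y.2.1 < j ∨ (y.2.1 = j ∧ y.2.2 < k)))))

private def F3 (p i j k : ℕ) : ℚ :=
  (1 : ℚ) + ((3 * (p : ℚ) ^ 2 + 12 * (p : ℚ) + 11) / 6) * (i : ℚ)
      + ((-(p : ℚ) - 2) / 2) * (i : ℚ) ^ 2 + (1 / 6) * (i : ℚ) ^ 3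
      + ((2 * (p : ℚ) + 3) / 2) * (j : ℚ) + (-(1 / 2)) * (j : ℚ) ^ 2
      - (i : ℚ) * (j : ℚ) + (k : ℚ)

private lemma S3_zero (p : ℕ) : S3 p 0 0 0 = ∅ := by
  ext ⟨a, b, c⟩
  simp [S3, Finset.mem_filter, Finset.mem_product, Finset.mem_range]

private lemma S3_step_k (p i j k : ℕ) (h : i + j + k ≤ p) :
    S3 p i j (k + 1) = insert (i, j, k) (S3 p i j k) := by
  ext ⟨a, b, c⟩
  simp only [S3, Finset.mem_insert, Finset.mem_filter, Finset.mem_product, Finset.mem_range,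
    Prod.mk.injEq]
  omega

private lemma S3_step_j (p i j : ℕ) (h : i + j ≤ p) :
    S3 p i (j + 1) 0 = insert (i, j, p - i - j) (S3 p i j (p - i - j)) := by
  ext ⟨a, b, c⟩
  simp only [S3, Finset.mem_insert, Finset.mem_filter, Finset.mem_product, Finset.mem_range,
    Prod.mk.injEq]
  omega

private lemma S3_step_i (p i : ℕ) (h : i ≤ p) :
    S3 p (i + 1) 0 0 = insert (i, p - i, 0) (S3 p i (p - i) 0) := by
  ext ⟨a, b, c⟩
  simp only [S3, Finset.mem_insert, Finset.mem_filter, Finset.mem_product, Finset.mem_range,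
    Prod.mk.injEq]
  omega

private lemma notMem_k (p i j k : ℕ) : (i, j, k) ∉ S3 p i j k := by
  simp only [S3, Finset.mem_filter, Finset.mem_product, Finset.mem_range]
  omega

private lemma card_step_k (p i j k : ℕ) (h : i + j + k ≤ p) :
    (S3 p i j (k + 1)).card = (S3 p i j k).card + 1 := by
  rw [S3_step_k p i j k h, Finset.card_insert_of_notMem (notMem_k p i j k)]

private lemma card_step_j (p i j : ℕ) (h : i + j ≤ p) :
    (S3 p i (j + 1) 0).card = (S3 p i j (p - i - j)).card + 1 := by
  rw [S3_step_j p i j h, Finset.card_insert_of_notMem]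
  simp only [S3, Finset.mem_filter, Finset.mem_product, Finset.mem_range]
  omega

private lemma card_step_i (p i : ℕ) (h : i ≤ p) :
    (S3 p (i + 1) 0 0).card = (S3 p i (p - i) 0).card + 1 := by
  rw [S3_step_i p i h, Finset.card_insert_of_notMem]
  simp only [S3, Finset.mem_filter, Finset.mem_product, Finset.mem_range]
  omega

private lemma F3_step_k (p i j k : ℕ) : F3 p i j (k + 1) = F3 p i j k + 1 := by
  simp only [F3]
  push_cast
  ring

private lemma F3_step_j (p i j : ℕ) (h : i + j ≤ p) :
    F3 p i (j + 1) 0 = F3 p i j (p - i - j) + 1 := by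
  simp only [F3]
  have hc : ((p - i - j : ℕ) : ℚ) = (p : ℚ) - i - j := by
    have : ((p - i - j : ℕ) : ℚ) + i + j = p := by
      have : p - i - j + i + j = p := by omega
      exact_mod_cast congrArg (Nat.cast : ℕ → ℚ) this
    linarith
  rw [hc]
  push_cast
  ring

private lemma F3_step_i (p i : ℕ) (h : i ≤ p) :
    F3 p (i + 1) 0 0 = F3 p i (p - i) 0 + 1 := by
  simp only [F3]
  have hc : ((p - i : ℕ) : ℚ) = (p : ℚ) - i := by
    have : ((p - i : ℕ) : ℚ) + i = p := by
      have : p - i + i = p := by omega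
      exact_mod_cast congrArg (Nat.cast : ℕ → ℚ) this
    linarith
  rw [hc]
  push_cast
  ring

private lemma main3 (p : ℕ) : ∀ i j k : ℕ, i + j + k ≤ p →
    F3 p i j k = 1 + ((S3 p i j k).card : ℚ) := by
  have step_k : ∀ i j k, i + j + k ≤ p →
      F3 p i j k = 1 + ((S3 p i j k).card : ℚ) →
      F3 p i j (k + 1) = 1 + ((S3 p i j (k + 1)).card : ℚ) := by
    intro i j k hle ih
    rw [F3_step_k, card_step_k p i j k hle, ih]
    push_cast; ring
  have base_jk : ∀ i, F3 p i 0 0 = 1 + ((S3 p i 0 0).card : ℚ) →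
      ∀ j, i + j ≤ p → ∀ k, i + j + k ≤ p →
      F3 p i j k = 1 + ((S3 p i j k).card : ℚ) := by
    intro i hi j
    induction j with
    | zero =>
      intro _ k
      induction k with
      | zero => intro _; simpa using hi
      | succ k ihk =>
        intro hk
        exact step_k i 0 k (by omega) (ihk (by omega))
    | succ j ihj =>
      intro hj k
      have hbase : F3 p i (j + 1) 0 = 1 + ((S3 p i (j + 1) 0).card : ℚ) := by
        have h1 : i + j ≤ p := by omega
        have h2 : F3 p i j (p - i - j) = 1 + ((S3 p i j (p - i - j)).card : ℚ) :=
          ihj h1 (p - i - j) (by omega)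
        rw [F3_step_j p i j h1, card_step_j p i j h1, h2]
        push_cast; ring
      induction k with
      | zero => intro _; exact hbase
      | succ k ihk =>
        intro hk
        exact step_k i (j + 1) k (by omega) (ihk (by omega))
  intro i
  induction i with
  | zero =>
    have h0 : F3 p 0 0 0 = 1 + ((S3 p 0 0 0).card : ℚ) := by
      rw [S3_zero]; simp [F3]
    exact fun j k h => base_jk 0 h0 j (by omega) k h
  | succ i ihi =>
    have hip : ∀ j k, (i + 1) + j + k ≤ p → i ≤ p := fun j k h => by omega
    intro j k h
    have hi : i ≤ p := by omega
    have hbase : F3 p (i + 1) 0 0 = 1 + ((S3 p (i + 1) 0 0).card : ℚ) := by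
      have h2 : F3 p i (p - i) 0 = 1 + ((S3 p i (p - i) 0).card : ℚ) :=
        ihi (p - i) 0 (by omega)
      rw [F3_step_i p i hi, card_step_i p i hi, h2]
      push_cast; ring
    exact base_jk (i + 1) hbase j (by omega) k h

/-- For every `p` and every triple `(i,j,k) ∈ ℕ³` with `i + j + k ≤ p`, the value
`m(i,j,k) = 1 + ((3p²+12p+11)/6)·i + ((−p−2)/2)·i² + (1/6)·i³ + ((2p+3)/2)·j + (−1/2)·j² − i·j + k`
equals `1` plus the number of triples `(i',j',k') ∈ ℕ³` with `i' + j' + k' ≤ p` preceding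
`(i,j,k)` in lexicographic order. -/
theorem three_dim_index_counts_lex_predecessors (p i j k : ℕ) (h : i + j + k ≤ p) :
    (1 : ℚ) + ((3 * (p : ℚ) ^ 2 + 12 * (p : ℚ) + 11) / 6) * (i : ℚ)
        + ((-(p : ℚ) - 2) / 2) * (i : ℚ) ^ 2 + (1 / 6) * (i : ℚ) ^ 3
        + ((2 * (p : ℚ) + 3) / 2) * (j : ℚ) + (-(1 / 2)) * (j : ℚ) ^ 2
        - (i : ℚ) * (j : ℚ) + (k : ℚ) =
      1 + (((Finset.range (p + 1) ×ˢ (Finset.range (p + 1) ×ˢ Finset.range (p + 1))).filter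
        (fun y : ℕ × ℕ × ℕ =>
          y.1 + y.2.1 + y.2.2 ≤ p ∧
            (y.1 < i ∨ (y.1 = i ∧ (y.2.1 < j ∨ (y.2.1 = j ∧ y.2.2 < k)))))).card : ℚ) := by
  exact main3 p i j k h
end

section
/- For every natural number p, the map m(i,j,k,q) = 1 + ((2p³+15p²+35p+25)/12)·i + ((−6p²−30p−35)/24)·i² + ((2p+5)/12)·i³ − (1/24)·i⁴ + ((3p²+12p+11)/6)·j + (−p−2)·i·j + (1/2)·i²·j + ((−p−2)/2)·j² + (1/2)·i·j² + (1/6)·j³ + ((2p+3)/2)·k − i·k − j·k − (1/2)·k² + q is a bijection from the set {(i,j,k,q) ∈ ℕ⁴ : i + j + k + q ≤ p} onto the set {1, 2, …, (p+1)(p+2)(p+3)(p+4)/24} of natural numbers. -/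
/-- The four-dimensional modal indexing function (Eq. (19) of the paper), computed in `ℚ`:
`m(i,j,k,q) = 1 + ((2p³+15p²+35p+25)/12)·i + ((−6p²−30p−35)/24)·i² + ((2p+5)/12)·i³ − (1/24)·i⁴`
`+ ((3p²+12p+11)/6)·j + (−p−2)·i·j + (1/2)·i²·j + ((−p−2)/2)·j² + (1/2)·i·j² + (1/6)·j³`
`+ ((2p+3)/2)·k − i·k − j·k − (1/2)·k² + q`. -/
noncomputable def fourDimIndex (p i j k q : ℕ) : ℚ :=
  1 + ((2 * (p : ℚ) ^ 3 + 15 * (p : ℚ) ^ 2 + 35 * (p : ℚ) + 25) / 12) * (i : ℚ)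
    + ((-6 * (p : ℚ) ^ 2 - 30 * (p : ℚ) - 35) / 24) * (i : ℚ) ^ 2
    + ((2 * (p : ℚ) + 5) / 12) * (i : ℚ) ^ 3 - (1 / 24) * (i : ℚ) ^ 4
    + ((3 * (p : ℚ) ^ 2 + 12 * (p : ℚ) + 11) / 6) * (j : ℚ)
    + (-(p : ℚ) - 2) * (i : ℚ) * (j : ℚ) + (1 / 2) * (i : ℚ) ^ 2 * (j : ℚ)
    + ((-(p : ℚ) - 2) / 2) * (j : ℚ) ^ 2 + (1 / 2) * (i : ℚ) * (j : ℚ) ^ 2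
    + (1 / 6) * (j : ℚ) ^ 3
    + ((2 * (p : ℚ) + 3) / 2) * (k : ℚ) - (i : ℚ) * (k : ℚ) - (j : ℚ) * (k : ℚ)
    - (1 / 2) * (k : ℚ) ^ 2 + (q : ℚ)

def N2 : ℕ → ℕ | 0 => 1 | (x+1) => N2 x + (x+2)
def N3 : ℕ → ℕ | 0 => 1 | (x+1) => N3 x + N2 (x+1)
def N4 : ℕ → ℕ | 0 => 1 | (x+1) => N4 x + N3 (x+1)

lemma N2_mono : Monotone N2 := monotone_nat_of_le_succ (fun n => by simp only [N2]; omega)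
lemma N3_mono : Monotone N3 := monotone_nat_of_le_succ (fun n => by simp only [N3]; omega)
lemma N4_mono : Monotone N4 := monotone_nat_of_le_succ (fun n => by simp only [N4]; omega)

lemma N2_ge (x : ℕ) : x + 1 ≤ N2 x := by
  induction x with
  | zero => simp [N2]
  | succ n ih => simp only [N2]; omega

lemma N3_ge (x : ℕ) : N2 x ≤ N3 x := by
  induction x with
  | zero => simp [N2, N3]
  | succ n ih => simp only [N2, N3] at *; have := N2_ge n; omega

lemma N4_ge (x : ℕ) : N3 x ≤ N4 x := by
  induction x with
  | zero => simp [N3, N4]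
  | succ n ih => simp only [N3, N4] at *; have := N3_ge n; have := N2_ge n; omega

lemma two_N2 (x : ℕ) : 2 * N2 x = (x+1)*(x+2) := by
  induction x with
  | zero => simp [N2]
  | succ n ih => simp [N2]; nlinarith [ih]

lemma six_N3 (x : ℕ) : 6 * N3 x = (x+1)*(x+2)*(x+3) := by
  induction x with
  | zero => simp [N3]
  | succ n ih => simp [N3]; nlinarith [ih, two_N2 (n+1)]

lemma twentyfour_N4 (x : ℕ) : 24 * N4 x = (x+1)*(x+2)*(x+3)*(x+4) := by
  induction x with
  | zero => simp [N4]
  | succ n ih => simp [N4]; nlinarith [ih, six_N3 (n+1)]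

def H2 (b c q : ℕ) : ℕ := N2 b - N2 c + q
def H3 (a b c q : ℕ) : ℕ := N3 a - N3 b + H2 b c q
def H4 (p a b c q : ℕ) : ℕ := N4 p - N4 a + H3 a b c q

lemma H2_lt {b c q : ℕ} (hq : q ≤ c) (hc : c ≤ b) : H2 b c q < N2 b := by
  have := N2_mono hc; have := N2_ge c; unfold H2; omega
lemma H3_lt {a b c q : ℕ} (hq : q ≤ c) (hc : c ≤ b) (hb : b ≤ a) : H3 a b c q < N3 a := by
  have := N3_mono hb; have := N3_ge b; have := H2_lt hq hc; unfold H3; omega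
lemma H4_lt {p a b c q : ℕ} (hq : q ≤ c) (hc : c ≤ b) (hb : b ≤ a) (ha : a ≤ p) :
    H4 p a b c q < N4 p := by
  have := N4_mono ha; have := N4_ge a; have := H3_lt hq hc hb; unfold H4; omega

lemma H2_step {b c : ℕ} (q : ℕ) (hc : c ≤ b) : H2 (b+1) c q = H2 b c q + (b+2) := by
  have := N2_mono hc; unfold H2; simp [N2]; omega
lemma H3_step {a b : ℕ} (c q : ℕ) (hb : b ≤ a) : H3 (a+1) b c q = H3 a b c q + N2 (a+1) := by
  have := N3_mono hb; unfold H3; simp [N3]; omega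
lemma H4_step {p a : ℕ} (b c q : ℕ) (ha : a ≤ p) : H4 (p+1) a b c q = H4 p a b c q + N3 (p+1) := by
  have := N4_mono ha; unfold H4; simp [N4]; omega

lemma H2_inj : ∀ b c q c' q', q ≤ c → c ≤ b → q' ≤ c' → c' ≤ b →
    H2 b c q = H2 b c' q' → c = c' ∧ q = q' := by
  intro b
  induction b with
  | zero => intro c q c' q' h1 h2 h3 h4 h5; omega
  | succ n ih =>
    intro c q c' q' h1 h2 h3 h4 h5
    rcases Nat.lt_or_ge c (n+1) with hc | hc <;> rcases Nat.lt_or_ge c' (n+1) with hc' | hc'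
    · rw [H2_step q (by omega), H2_step q' (by omega)] at h5
      exact ih c q c' q' h1 (by omega) h3 (by omega) (by omega)
    · have hcc : c' = n+1 := by omega
      subst hcc
      rw [H2_step q (by omega)] at h5
      have : H2 (n+1) (n+1) q' = q' := by unfold H2; omega
      omega
    · have hcc : c = n+1 := by omega
      subst hcc
      rw [H2_step q' (by omega)] at h5
      have : H2 (n+1) (n+1) q = q := by unfold H2; omega
      omega
    · have e1 : c = n+1 := by omega
      have e2 : c' = n+1 := by omega
      subst e1; subst e2
      have h6 : H2 (n+1) (n+1) q = q := by unfold H2; omega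
      have h7 : H2 (n+1) (n+1) q' = q' := by unfold H2; omega
      omega

lemma H3_inj : ∀ a b c q b' c' q', q ≤ c → c ≤ b → b ≤ a → q' ≤ c' → c' ≤ b' → b' ≤ a →
    H3 a b c q = H3 a b' c' q' → b = b' ∧ c = c' ∧ q = q' := by
  intro a
  induction a with
  | zero =>
    intro b c q b' c' q' h1 h2 h3 h4 h5 h6 h7
    have hb : b = 0 := by omega
    have hb' : b' = 0 := by omega
    subst hb; subst hb'
    have h8 : H3 0 0 c q = H2 0 c q := by unfold H3; omega
    have h9 : H3 0 0 c' q' = H2 0 c' q' := by unfold H3; omega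
    have := H2_inj 0 c q c' q' h1 h2 h4 h5 (by omega)
    omega
  | succ n ih =>
    intro b c q b' c' q' h1 h2 h3 h4 h5 h6 h7
    rcases Nat.lt_or_ge b (n+1) with hb | hb <;> rcases Nat.lt_or_ge b' (n+1) with hb' | hb'
    · rw [H3_step c q (by omega), H3_step c' q' (by omega)] at h7
      exact ih b c q b' c' q' h1 h2 (by omega) h4 h5 (by omega) (by omega)
    · have e : b' = n+1 := by omega
      subst e
      rw [H3_step c q (by omega)] at h7
      have e1 : H3 (n+1) (n+1) c' q' = H2 (n+1) c' q' := by unfold H3; omega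
      have := H2_lt h4 h5
      have := H3_lt h1 h2 (by omega : b ≤ n)
      have := N2_ge (n+1)
      have := N3_ge n
      -- H3 n b c q + N2 (n+1) ≥ N2(n+1) > ... contradiction since H2 (n+1) c' q' < N2 (n+1)
      omega
    · have e : b = n+1 := by omega
      subst e
      rw [H3_step c' q' (by omega)] at h7
      have e1 : H3 (n+1) (n+1) c q = H2 (n+1) c q := by unfold H3; omega
      have := H2_lt h1 h2
      omega
    · have e1 : b = n+1 := by omega
      have e2 : b' = n+1 := by omega
      subst e1; subst e2
      have e3 : H3 (n+1) (n+1) c q = H2 (n+1) c q := by unfold H3; omega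
      have e4 : H3 (n+1) (n+1) c' q' = H2 (n+1) c' q' := by unfold H3; omega
      have := H2_inj (n+1) c q c' q' h1 h2 h4 h5 (by omega)
      omega

lemma H4_inj : ∀ p a b c q a' b' c' q', q ≤ c → c ≤ b → b ≤ a → a ≤ p →
    q' ≤ c' → c' ≤ b' → b' ≤ a' → a' ≤ p →
    H4 p a b c q = H4 p a' b' c' q' → a = a' ∧ b = b' ∧ c = c' ∧ q = q' := by
  intro p
  induction p with
  | zero =>
    intro a b c q a' b' c' q' h1 h2 h3 h4 h5 h6 h7 h8 h9
    have ha : a = 0 := by omega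
    have ha' : a' = 0 := by omega
    subst ha; subst ha'
    have e1 : H4 0 0 b c q = H3 0 b c q := by unfold H4; omega
    have e2 : H4 0 0 b' c' q' = H3 0 b' c' q' := by unfold H4; omega
    have := H3_inj 0 b c q b' c' q' h1 h2 h3 h5 h6 h7 (by omega)
    omega
  | succ n ih =>
    intro a b c q a' b' c' q' h1 h2 h3 h4 h5 h6 h7 h8 h9
    rcases Nat.lt_or_ge a (n+1) with hA | hA <;> rcases Nat.lt_or_ge a' (n+1) with hA' | hA'
    · rw [H4_step b c q (by omega), H4_step b' c' q' (by omega)] at h9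
      exact ih a b c q a' b' c' q' h1 h2 h3 (by omega) h5 h6 h7 (by omega) (by omega)
    · have e : a' = n+1 := by omega
      subst e
      rw [H4_step b c q (by omega)] at h9
      have e1 : H4 (n+1) (n+1) b' c' q' = H3 (n+1) b' c' q' := by unfold H4; omega
      have := H3_lt h5 h6 h7
      omega
    · have e : a = n+1 := by omega
      subst e
      rw [H4_step b' c' q' (by omega)] at h9
      have e1 : H4 (n+1) (n+1) b c q = H3 (n+1) b c q := by unfold H4; omega
      have := H3_lt h1 h2 h3
      omega
    · have e1 : a = n+1 := by omega
      have e2 : a' = n+1 := by omega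
      subst e1; subst e2
      have e3 : H4 (n+1) (n+1) b c q = H3 (n+1) b c q := by unfold H4; omega
      have e4 : H4 (n+1) (n+1) b' c' q' = H3 (n+1) b' c' q' := by unfold H4; omega
      have := H3_inj (n+1) b c q b' c' q' h1 h2 h3 h5 h6 h7 (by omega)
      omega

lemma H2_surj : ∀ b v, v < N2 b → ∃ c q, q ≤ c ∧ c ≤ b ∧ H2 b c q = v := by
  intro b
  induction b with
  | zero => intro v hv; simp [N2] at hv; exact ⟨0, 0, le_refl _, le_refl _, by subst hv; unfold H2; omega⟩
  | succ n ih =>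
    intro v hv
    rcases Nat.lt_or_ge v (n+2) with h | h
    · exact ⟨n+1, v, by omega, le_refl _, by unfold H2; omega⟩
    · have hv2 : v - (n+2) < N2 n := by simp [N2] at hv; omega
      obtain ⟨c, q, h1, h2, h3⟩ := ih (v - (n+2)) hv2
      exact ⟨c, q, h1, by omega, by rw [H2_step q h2]; omega⟩

lemma H3_surj : ∀ a v, v < N3 a → ∃ b c q, q ≤ c ∧ c ≤ b ∧ b ≤ a ∧ H3 a b c q = v := by
  intro a
  induction a with
  | zero =>
    intro v hv
    have : N3 0 = 1 := by simp [N3]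
    obtain ⟨c, q, h1, h2, h3⟩ := H2_surj 0 v (by simp [N2]; omega)
    exact ⟨0, c, q, h1, h2, le_refl _, by unfold H3; omega⟩
  | succ n ih =>
    intro v hv
    rcases Nat.lt_or_ge v (N2 (n+1)) with h | h
    · obtain ⟨c, q, h1, h2, h3⟩ := H2_surj (n+1) v h
      exact ⟨n+1, c, q, h1, h2, le_refl _, by unfold H3; omega⟩
    · have hv2 : v - N2 (n+1) < N3 n := by simp [N3] at hv; omega
      obtain ⟨b, c, q, h1, h2, h3, h4⟩ := ih (v - N2 (n+1)) hv2
      exact ⟨b, c, q, h1, h2, by omega, by rw [H3_step c q h3]; omega⟩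

lemma H4_surj : ∀ p v, v < N4 p → ∃ a b c q, q ≤ c ∧ c ≤ b ∧ b ≤ a ∧ a ≤ p ∧ H4 p a b c q = v := by
  intro p
  induction p with
  | zero =>
    intro v hv
    have h0 : N4 0 = 1 := by simp [N4]
    obtain ⟨b, c, q, h1, h2, h3, h4⟩ := H3_surj 0 v (by simp [N3]; omega)
    exact ⟨0, b, c, q, h1, h2, h3, le_refl _, by unfold H4; omega⟩
  | succ n ih =>
    intro v hv
    rcases Nat.lt_or_ge v (N3 (n+1)) with h | h
    · obtain ⟨b, c, q, h1, h2, h3, h4⟩ := H3_surj (n+1) v h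
      exact ⟨n+1, b, c, q, h1, h2, h3, le_refl _, by unfold H4; omega⟩
    · have hv2 : v - N3 (n+1) < N4 n := by simp [N4] at hv; omega
      obtain ⟨a, b, c, q, h1, h2, h3, h4, h5⟩ := ih (v - N3 (n+1)) hv2
      exact ⟨a, b, c, q, h1, h2, h3, by omega, by rw [H4_step b c q h4]; omega⟩
lemma N2_cast (x : ℕ) : (N2 x : ℚ) = ((x:ℚ)+1)*((x:ℚ)+2)/2 := by
  have h := two_N2 x
  have h2 : ((2 * N2 x : ℕ) : ℚ) = (((x+1)*(x+2) : ℕ) : ℚ) := by rw [h]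
  push_cast at h2; linarith

lemma N3_cast (x : ℕ) : (N3 x : ℚ) = ((x:ℚ)+1)*((x:ℚ)+2)*((x:ℚ)+3)/6 := by
  have h := six_N3 x
  have h2 : ((6 * N3 x : ℕ) : ℚ) = (((x+1)*(x+2)*(x+3) : ℕ) : ℚ) := by rw [h]
  push_cast at h2; linarith

lemma N4_cast (x : ℕ) : (N4 x : ℚ) = ((x:ℚ)+1)*((x:ℚ)+2)*((x:ℚ)+3)*((x:ℚ)+4)/24 := by
  have h := twentyfour_N4 x
  have h2 : ((24 * N4 x : ℕ) : ℚ) = (((x+1)*(x+2)*(x+3)*(x+4) : ℕ) : ℚ) := by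
    rw [h]
  push_cast at h2; linarith

lemma index_eq (p i j k q : ℕ) (h : i + j + k + q ≤ p) :
    fourDimIndex p i j k q = ((1 + H4 p (p-i) (p-(i+j)) (p-(i+j+k)) q : ℕ) : ℚ) := by
  have hap : p - i ≤ p := by omega
  have hba : p - (i+j) ≤ p - i := by omega
  have hcb : p - (i+j+k) ≤ p - (i+j) := by omega
  unfold H4 H3 H2
  push_cast [Nat.cast_sub (N4_mono hap), Nat.cast_sub (N3_mono hba), Nat.cast_sub (N2_mono hcb)]
  rw [N4_cast, N4_cast, N3_cast, N3_cast, N2_cast, N2_cast]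
  have e1 : ((p - i : ℕ) : ℚ) = (p:ℚ) - i := by rw [Nat.cast_sub (by omega)]
  have e2 : ((p - (i+j) : ℕ) : ℚ) = (p:ℚ) - ((i:ℚ)+(j:ℚ)) := by
    rw [Nat.cast_sub (by omega)]; push_cast; ring
  have e3 : ((p - (i+j+k) : ℕ) : ℚ) = (p:ℚ) - ((i:ℚ)+(j:ℚ)+(k:ℚ)) := by
    rw [Nat.cast_sub (by omega)]; push_cast; ring
  rw [e1, e2, e3]
  unfold fourDimIndex
  ring

/-- For every natural number `p`, the four-dimensional modal indexing map is a
bijection from `{(i,j,k,q) ∈ ℕ⁴ : i + j + k + q ≤ p}` onto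
`{1, 2, …, (p+1)(p+2)(p+3)(p+4)/24} ⊆ ℕ`. -/
theorem four_dim_index_bijection (p : ℕ) :
    Set.BijOn
      (fun x : ℕ × ℕ × ℕ × ℕ => fourDimIndex p x.1 x.2.1 x.2.2.1 x.2.2.2)
      {x : ℕ × ℕ × ℕ × ℕ | x.1 + x.2.1 + x.2.2.1 + x.2.2.2 ≤ p}
      {m : ℚ | ∃ n : ℕ, 1 ≤ n ∧ n ≤ (p + 1) * (p + 2) * (p + 3) * (p + 4) / 24 ∧ m = (n : ℚ)} := by
  have hNp : (p + 1) * (p + 2) * (p + 3) * (p + 4) / 24 = N4 p := by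
    have := twentyfour_N4 p; omega
  refine ⟨?_, ?_, ?_⟩
  · rintro ⟨i, j, k, q⟩ hx
    simp only [Set.mem_setOf_eq] at hx ⊢
    refine ⟨1 + H4 p (p-i) (p-(i+j)) (p-(i+j+k)) q, by omega, ?_, index_eq p i j k q hx⟩
    rw [hNp]
    have := H4_lt (p := p) (a := p-i) (b := p-(i+j)) (c := p-(i+j+k)) (q := q)
      (by omega) (by omega) (by omega) (by omega)
    omega
  · rintro ⟨i, j, k, q⟩ hx ⟨i', j', k', q'⟩ hy heq
    simp only [Set.mem_setOf_eq] at hx hy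
    simp only at heq
    rw [index_eq p i j k q hx, index_eq p i' j' k' q' hy, Nat.cast_inj] at heq
    have := H4_inj p (p-i) (p-(i+j)) (p-(i+j+k)) q (p-i') (p-(i'+j')) (p-(i'+j'+k')) q'
      (by omega) (by omega) (by omega) (by omega)
      (by omega) (by omega) (by omega) (by omega) (by omega)
    simp only [Prod.mk.injEq]
    exact ⟨by omega, by omega, by omega, by omega⟩
  · rintro m ⟨n, h1, h2, hm⟩
    rw [hNp] at h2
    obtain ⟨a, b, c, q, hq, hc, hb, ha, hv⟩ := H4_surj p (n-1) (by omega)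
    refine ⟨(p - a, a - b, b - c, q), by simp only [Set.mem_setOf_eq]; omega, ?_⟩
    simp only
    rw [index_eq p (p-a) (a-b) (b-c) q (by omega)]
    have e1 : p - (p - a) = a := by omega
    have e2 : p - ((p-a) + (a-b)) = b := by omega
    have e3 : p - ((p-a) + (a-b) + (b-c)) = c := by omega
    rw [e1, e2, e3, hv, hm]
    norm_cast
    omega
end
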